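/- arXiv:1611.06497 — 3 statements merged into one kernel-verified Lean document; each statement's English description precedes it below -/
import Mathlib

section
/- Let C be a positive natural number, j : Fin C a fixed index, σ² > 0, g_j > 0, and g_c ≥ 0 for all c ≠ j. Define the SINR in log-power coordinates by γ(exp(p̃)) = g_j · exp(p̃_j) / (σ² + ∑_{c ≠ j} g_c · exp(p̃_c)). Then the function p̃ ↦ log(γ(exp(p̃))) = log(g_j) + p̃_j − log(σ² + ∑_{c ≠ j} g_c · exp(p̃_c)) is concave on ℝ^C (Fin C → ℝ). -/
/-!
Writing `F(p̃) = σ² + ∑_{c ≠ j} g_c exp p̃_c`, the term `log g_j + p̃_j` is affine, so it suffices that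
`log ∘ F` is convex, i.e. `F(a x + b y) ≤ F(x)^a F(y)^b`. Each summand of `F(a x + b y)` is
`(g_c e^{x_c})^a (g_c e^{y_c})^b` and `σ² = (σ²)^a (σ²)^b`, so this is Hölder's inequality for the
exponents `1/a, 1/b`, which follows termwise from the weighted AM-GM inequality.
-/

open Real Finset

theorem Real.sum_rpow_mul_rpow_le_of_add_eq_one {ι : Type*} (s : Finset ι) {u v : ι → ℝ}
    (hu : ∀ i ∈ s, 0 ≤ u i) (hv : ∀ i ∈ s, 0 ≤ v i) (hU : 0 < ∑ i ∈ s, u i)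
    (hV : 0 < ∑ i ∈ s, v i) {a b : ℝ} (ha : 0 ≤ a) (hb : 0 ≤ b) (hab : a + b = 1) :
    ∑ i ∈ s, u i ^ a * v i ^ b ≤ (∑ i ∈ s, u i) ^ a * (∑ i ∈ s, v i) ^ b := by
  set U := ∑ i ∈ s, u i
  set V := ∑ i ∈ s, v i
  have hterm : ∀ i ∈ s, u i ^ a * v i ^ b ≤ U ^ a * V ^ b * (a * (u i / U) + b * (v i / V)) := by
    intro i hi
    have hamgm := geom_mean_le_arith_mean2_weighted ha hb
      (div_nonneg (hu i hi) hU.le) (div_nonneg (hv i hi) hV.le) hab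
    rw [div_rpow (hu i hi) hU.le, div_rpow (hv i hi) hV.le] at hamgm
    calc u i ^ a * v i ^ b = U ^ a * V ^ b * (u i ^ a / U ^ a * (v i ^ b / V ^ b)) := by
          field_simp
      _ ≤ U ^ a * V ^ b * (a * (u i / U) + b * (v i / V)) := by gcongr
  calc ∑ i ∈ s, u i ^ a * v i ^ b
      ≤ ∑ i ∈ s, U ^ a * V ^ b * (a * (u i / U) + b * (v i / V)) := sum_le_sum hterm
    _ = U ^ a * V ^ b * (a * (U / U) + b * (V / V)) := by
        rw [← mul_sum, sum_add_distrib, ← mul_sum, ← mul_sum, ← sum_div, ← sum_div]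
    _ = U ^ a * V ^ b := by rw [div_self hU.ne', div_self hV.ne', mul_one, mul_one, hab, mul_one]

theorem Real.mul_exp_add_eq_rpow_mul_rpow {w : ℝ} (hw : 0 ≤ w) (x y : ℝ) {a b : ℝ}
    (hab : a + b = 1) : w * exp (a * x + b * y) = (w * exp x) ^ a * (w * exp y) ^ b := by
  have hw_split : w ^ a * w ^ b = w := by
    rw [← rpow_add' hw (by rw [hab]; exact one_ne_zero), hab, rpow_one]
  rw [mul_rpow hw (exp_pos x).le, mul_rpow hw (exp_pos y).le, ← exp_mul, ← exp_mul, exp_add,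
    mul_comm x, mul_comm y]
  linear_combination (-(exp (a * x) * exp (b * y))) * hw_split

theorem Real.convexOn_log_add_sum_mul_exp {ι : Type*} (s : Finset ι) {σ : ℝ} (hσ : 0 < σ)
    {w : ι → ℝ} (hw : ∀ i ∈ s, 0 ≤ w i) :
    ConvexOn ℝ Set.univ fun x : ι → ℝ => log (σ + ∑ i ∈ s, w i * exp (x i)) := by
  have hpos : ∀ x : ι → ℝ, 0 < σ + ∑ i ∈ s, w i * exp (x i) := fun x =>
    add_pos_of_pos_of_nonneg hσ <| sum_nonneg fun i hi => mul_nonneg (hw i hi) (exp_pos _).le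
  refine ⟨convex_univ, fun x _ y _ a b ha hb hab => ?_⟩
  set F := fun x : ι → ℝ => σ + ∑ i ∈ s, w i * exp (x i)
  -- `σ` is the summand of index `none`, so Hölder applies to `σ + ∑ …` as one sum over `Option ι`
  have hF : ∀ x, F x = ∑ i ∈ s.insertNone, i.elim σ fun i => w i * exp (x i) := fun x =>
    add_sum_eq_sum_insertNone _ _ _
  have hnonneg : ∀ x : ι → ℝ, ∀ i ∈ s.insertNone, 0 ≤ i.elim σ fun i => w i * exp (x i) := by
    rintro x (_ | i) hi
    · exact hσ.le
    · exact mul_nonneg (hw i (some_mem_insertNone.1 hi)) (exp_pos _).le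
  have hholder : F (a • x + b • y) ≤ F x ^ a * F y ^ b := by
    rw [hF, hF, hF]
    refine le_of_eq_of_le (sum_congr rfl ?_) (sum_rpow_mul_rpow_le_of_add_eq_one _
      (hnonneg x) (hnonneg y) (hF x ▸ hpos x) (hF y ▸ hpos y) ha hb hab)
    rintro (_ | i) hi
    · show σ = σ ^ a * σ ^ b
      rw [← rpow_add hσ, hab, rpow_one]
    · show w i * exp (a * x i + b * y i) = _
      exact mul_exp_add_eq_rpow_mul_rpow (hw i (some_mem_insertNone.1 hi)) _ _ hab
  calc log (F (a • x + b • y)) ≤ log (F x ^ a * F y ^ b) := log_le_log (hpos _) hholder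
    _ = a • log (F x) + b • log (F y) := by
        rw [log_mul (rpow_pos_of_pos (hpos x) a).ne' (rpow_pos_of_pos (hpos y) b).ne',
          log_rpow (hpos x), log_rpow (hpos y), smul_eq_mul, smul_eq_mul]

theorem logSINR_concave_general (C : ℕ) (j : Fin C) (σ2 : ℝ) (hσ2 : 0 < σ2)
    (g : Fin C → ℝ) (hg : ∀ c, c ≠ j → 0 ≤ g c) :
    ConcaveOn ℝ Set.univ
      (fun pt : Fin C → ℝ =>
        Real.log (g j) + pt j -
          Real.log (σ2 + ∑ c ∈ Finset.univ.erase j, g c * Real.exp (pt c))) := by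
  have haffine : ConcaveOn ℝ Set.univ fun pt : Fin C → ℝ => Real.log (g j) + pt j :=
    (concaveOn_const _ convex_univ).add ((LinearMap.proj j).concaveOn convex_univ)
  exact haffine.sub <|
    convexOn_log_add_sum_mul_exp _ hσ2 fun c hc => hg c (ne_of_mem_erase hc)

/-- In log-power coordinates, the log-SINR
`p̃ ↦ log g_j + p̃_j − log (σ² + ∑_{c ≠ j} g_c exp (p̃_c))` is concave on `Fin C → ℝ`. -/
theorem logSINR_concave (C : ℕ) (hC : 0 < C) (j : Fin C) (σ2 : ℝ) (hσ2 : 0 < σ2)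
    (g : Fin C → ℝ) (hgj : 0 < g j) (hg : ∀ c, c ≠ j → 0 ≤ g c) :
    ConcaveOn ℝ Set.univ
      (fun pt : Fin C → ℝ =>
        Real.log (g j) + pt j -
          Real.log (σ2 + ∑ c ∈ Finset.univ.erase j, g c * Real.exp (pt c))) :=
  logSINR_concave_general C j σ2 hσ2 g hg
end

section
/- The function z ↦ log(log(1 + exp(z))) is concave on ℝ. -/
/-!
The inner function `h z = log (1 + exp z)` is positive, and `log ∘ h` is concave as soon as
`h * h'' ≤ h' ^ 2`, since `(log h)'' = (h * h'' - h' ^ 2) / h ^ 2`. With `s = exp z` we have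
`h' = s / (1 + s)` and `h'' = s / (1 + s) ^ 2`, so the condition reads `log (1 + s) ≤ s`.
-/

open Real

theorem concaveOn_log_comp_of_mul_deriv2_le_sq {D : Set ℝ} (hD : Convex ℝ D)
    {h h' h'' : ℝ → ℝ} (hpos : ∀ x ∈ D, 0 < h x) (hcont : ContinuousOn h D)
    (hh' : ∀ x ∈ interior D, HasDerivAt h (h' x) x)
    (hh'' : ∀ x ∈ interior D, HasDerivAt h' (h'' x) x)
    (hle : ∀ x ∈ interior D, h x * h'' x ≤ h' x ^ 2) :
    ConcaveOn ℝ D (fun x => log (h x)) := by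
  have hne : ∀ x ∈ interior D, h x ≠ 0 := fun x hx => (hpos x (interior_subset hx)).ne'
  refine concaveOn_of_hasDerivWithinAt2_nonpos hD (hcont.log fun x hx => (hpos x hx).ne')
    (f' := fun x => h' x / h x) (f'' := fun x => (h'' x * h x - h' x * h' x) / h x ^ 2)
    (fun x hx => ((hh' x hx).log (hne x hx)).hasDerivWithinAt)
    (fun x hx => ((hh'' x hx).div (hh' x hx) (hne x hx)).hasDerivWithinAt) fun x hx => ?_
  exact div_nonpos_of_nonpos_of_nonneg (by nlinarith [hle x hx]) (sq_nonneg _)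

lemma log_one_add_exp_pos (z : ℝ) : 0 < log (1 + exp z) :=
  log_pos (by linarith [exp_pos z])

lemma hasDerivAt_log_one_add_exp (z : ℝ) :
    HasDerivAt (fun z => log (1 + exp z)) (exp z / (1 + exp z)) z :=
  ((hasDerivAt_exp z).const_add 1).log (by positivity)

lemma hasDerivAt_exp_div_one_add_exp (z : ℝ) :
    HasDerivAt (fun z => exp z / (1 + exp z)) (exp z / (1 + exp z) ^ 2) z := by
  refine ((hasDerivAt_exp z).div ((hasDerivAt_exp z).const_add 1) (by positivity)).congr_deriv ?_
  ring

lemma log_one_add_exp_mul_le_sq (z : ℝ) :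
    log (1 + exp z) * (exp z / (1 + exp z) ^ 2) ≤ (exp z / (1 + exp z)) ^ 2 := by
  have hlog : log (1 + exp z) ≤ exp z := by
    linarith [log_le_sub_one_of_pos (by positivity : 0 < 1 + exp z)]
  rw [div_pow, mul_div_assoc', div_le_div_iff_of_pos_right (by positivity), sq]
  exact mul_le_mul_of_nonneg_right hlog (exp_pos z).le

/-- The function `z ↦ log (log (1 + exp z))` is concave on `ℝ`. -/
theorem loglog_one_add_exp_concave :
    ConcaveOn ℝ Set.univ (fun z : ℝ => Real.log (Real.log (1 + Real.exp z))) :=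
  concaveOn_log_comp_of_mul_deriv2_le_sq convex_univ (fun z _ => log_one_add_exp_pos z)
    (fun z _ => (hasDerivAt_log_one_add_exp z).continuousAt.continuousWithinAt)
    (fun z _ => hasDerivAt_log_one_add_exp z) (fun z _ => hasDerivAt_exp_div_one_add_exp z)
    fun z _ => log_one_add_exp_mul_le_sq z
end

section
/- Consider N users and C cells. For each user n let c(n) : Fin C be its serving cell, let G_{n,c} > 0 be channel gains, σ² > 0 the noise power, W_n > 0 the bandwidth allocated to user n, and P^max_c > 0 the maximum power of cell c. Define γ_n(p) = G_{n,c(n)} · p_{c(n)} / (σ² + ∑_{c ≠ c(n)} G_{n,c} · p_c). Then the transformed feasible set S = { (r̃, p̃) ∈ (Fin N → ℝ) × (Fin C → ℝ) : (∀ n, r̃_n ≤ log(W_n) + log( log(1 + γ_n(exp ∘ p̃)) / log 2 )) ∧ (∀ c, p̃_c ≤ log(P^max_c)) } is a convex subset of (Fin N → ℝ) × (Fin C → ℝ). (This is the first part of Proposition 1: the transformed problem (3) is jointly convex in r̃ and p̃.) -/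
/-!
In the variables `p̃ = log p` the log-SINR is `log G + p̃_{c(n)} - log (σ² + ∑ G e^{p̃_c})`, an affine
function minus a log-sum-exp, hence concave. The transformed rate bound is
`log W + g (log γ) - log (log 2)` with `g t = log (log (1 + e^t))`, which is concave and increasing
(`g'' ≤ 0` reduces to `log (1 + e^t) ≤ e^t`), so it is concave in `p̃`. The feasible set is thus
an intersection of hypographs of concave functions and of half-spaces.
-/

open Real

/-- The SINR of user `n` under cell power vector `p`:
`γ_n(p) = G_{n,c(n)} p_{c(n)} / (σ² + ∑_{c ≠ c(n)} G_{n,c} p_c)`. -/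
noncomputable def sinr {N C : ℕ} (cn : Fin N → Fin C) (G : Fin N → Fin C → ℝ) (σ2 : ℝ)
    (n : Fin N) (p : Fin C → ℝ) : ℝ :=
  G n (cn n) * p (cn n) / (σ2 + ∑ c ∈ Finset.univ.erase (cn n), G n c * p c)

open Set

namespace Real

lemma hasDerivAt_log_one_add_exp (t : ℝ) :
    HasDerivAt (fun t => log (1 + exp t)) (exp t / (1 + exp t)) t :=
  ((hasDerivAt_exp t).const_add 1).log (by positivity)

lemma log_one_add_exp_pos (t : ℝ) : 0 < log (1 + exp t) :=
  log_pos (by linarith [exp_pos t])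

lemma concaveOn_log_log_one_add_exp : ConcaveOn ℝ univ fun t => log (log (1 + exp t)) := by
  have hden : ∀ t, (1 + exp t) * log (1 + exp t) ≠ 0 := fun t =>
    (mul_pos (by positivity) (log_one_add_exp_pos t)).ne'
  have h' : ∀ t, HasDerivAt (fun t => log (log (1 + exp t)))
      (exp t / ((1 + exp t) * log (1 + exp t))) t := fun t => by
    simpa only [div_div] using (hasDerivAt_log_one_add_exp t).log (log_one_add_exp_pos t).ne'
  have h'' : ∀ t, HasDerivAt (fun t => exp t / ((1 + exp t) * log (1 + exp t)))
      (exp t * (log (1 + exp t) - exp t) / ((1 + exp t) * log (1 + exp t)) ^ 2) t := fun t => by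
    refine ((hasDerivAt_exp t).div (((hasDerivAt_exp t).const_add 1).mul
      (hasDerivAt_log_one_add_exp t)) (hden t)).congr_deriv ?_
    simp only [Pi.mul_apply]
    field_simp
    ring
  refine concaveOn_of_hasDerivWithinAt2_nonpos convex_univ
    (fun t _ => (h' t).continuousAt.continuousWithinAt) (fun t _ => (h' t).hasDerivWithinAt)
    (fun t _ => (h'' t).hasDerivWithinAt) fun t _ => ?_
  have hlog : log (1 + exp t) ≤ exp t := by
    linarith [log_le_sub_one_of_pos (by positivity : (0:ℝ) < 1 + exp t)]
  exact div_nonpos_of_nonpos_of_nonneg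
    (mul_nonpos_of_nonneg_of_nonpos (exp_pos t).le (by linarith)) (sq_nonneg _)

lemma monotone_log_log_one_add_exp : Monotone fun t => log (log (1 + exp t)) := fun s t hst =>
  log_le_log (log_one_add_exp_pos s) <|
    log_le_log (by positivity) (by gcongr)

lemma add_sum_mul_exp_pos {ι : Type*} (s : Finset ι) {σ : ℝ} (hσ : 0 < σ) {w : ι → ℝ}
    (hw : ∀ i ∈ s, 0 ≤ w i) (p : ι → ℝ) : 0 < σ + ∑ i ∈ s, w i * exp (p i) :=
  add_pos_of_pos_of_nonneg hσ (Finset.sum_nonneg fun i hi => mul_nonneg (hw i hi) (exp_pos _).le)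

/- `log (σ + ∑ w_i e^{p_i}) ≤ t` iff `σ e^{-t} + ∑ w_i e^{p_i - t} ≤ 1`, so the epigraph is a
sublevel set of a sum of exponentials of linear forms. -/
lemma convexOn_log_add_sum_mul_exp_s4 {ι : Type*} (s : Finset ι) {σ : ℝ} (hσ : 0 < σ)
    {w : ι → ℝ} (hw : ∀ i ∈ s, 0 ≤ w i) :
    ConvexOn ℝ univ fun p : ι → ℝ => log (σ + ∑ i ∈ s, w i * exp (p i)) := by
  have hexp : ∀ ℓ : (ι → ℝ) × ℝ →ₗ[ℝ] ℝ, ConvexOn ℝ univ fun q => exp (ℓ q) := fun ℓ =>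
    convexOn_exp.comp_linearMap ℓ
  have hΦ : ConvexOn ℝ univ fun q : (ι → ℝ) × ℝ =>
      σ * exp (-q.2) + ∑ i ∈ s, w i * exp (q.1 i - q.2) := by
    refine ((hexp (-LinearMap.snd ℝ _ _)).smul hσ.le).add ?_
    have := Finset.sum_induction (fun i q => w i * exp (q.1 i - q.2))
      (fun f : (ι → ℝ) × ℝ → ℝ => ConvexOn ℝ univ f) (fun _ _ => ConvexOn.add)
      (convexOn_const 0 convex_univ) fun i hi =>
        (hexp (LinearMap.proj i ∘ₗ LinearMap.fst ℝ _ _ - LinearMap.snd ℝ _ _)).smul (hw i hi)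
    rwa [Finset.sum_fn] at this
  rw [convexOn_iff_convex_epigraph]
  convert hΦ.convex_le 1 using 1
  ext ⟨p, t⟩
  simp only [mem_ofPred_eq, mem_univ, true_and]
  rw [log_le_iff_le_exp (add_sum_mul_exp_pos s hσ hw p)]
  have : σ * exp (-t) + ∑ i ∈ s, w i * exp (p i - t) = (σ + ∑ i ∈ s, w i * exp (p i)) / exp t := by
    simp only [exp_neg, exp_sub, div_eq_mul_inv, add_mul, Finset.sum_mul, mul_assoc]
  rw [this, div_le_one (exp_pos t)]

end Real

theorem ConcaveOn.comp_of_monotone {E : Type*} [AddCommGroup E] [Module ℝ E] {s : Set E}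
    {f : E → ℝ} {g : ℝ → ℝ} (hg : ConcaveOn ℝ univ g) (hg_mono : Monotone g)
    (hf : ConcaveOn ℝ s f) : ConcaveOn ℝ s (g ∘ f) :=
  ⟨hf.1, fun _ hx _ hy _ _ ha hb hab =>
    (hg.2 trivial trivial ha hb hab).trans (hg_mono (hf.2 hx hy ha hb hab))⟩

theorem convex_setOf_forall_le {E ι : Type*} [AddCommGroup E] [Module ℝ E] {φ f : ι → E → ℝ}
    (hφ : ∀ i, ConvexOn ℝ univ (φ i)) (hf : ∀ i, ConcaveOn ℝ univ (f i)) :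
    Convex ℝ {x | ∀ i, φ i x ≤ f i x} := by
  have : {x | ∀ i, φ i x ≤ f i x} = ⋂ i, {x ∈ univ | (φ i - f i) x ≤ 0} := by
    ext x
    simp
  rw [this]
  exact convex_iInter fun i => ((hφ i).sub (hf i)).convex_le 0

section SINR

variable {N C : ℕ} {cn : Fin N → Fin C} {G : Fin N → Fin C → ℝ} {σ2 : ℝ}

theorem sinr_exp_pos (hG : ∀ n c, 0 < G n c) (hσ2 : 0 < σ2) (n : Fin N) (p : Fin C → ℝ) :
    0 < sinr cn G σ2 n fun c => exp (p c) :=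
  div_pos (mul_pos (hG n (cn n)) (exp_pos _)) (add_sum_mul_exp_pos _ hσ2 (fun c _ => (hG n c).le) p)

theorem log_sinr_exp (hG : ∀ n c, 0 < G n c) (hσ2 : 0 < σ2) (n : Fin N) (p : Fin C → ℝ) :
    log (sinr cn G σ2 n fun c => exp (p c)) =
      log (G n (cn n)) + p (cn n) -
        log (σ2 + ∑ c ∈ Finset.univ.erase (cn n), G n c * exp (p c)) := by
  rw [sinr, log_div (mul_pos (hG n (cn n)) (exp_pos _)).ne'
      (add_sum_mul_exp_pos _ hσ2 (fun c _ => (hG n c).le) p).ne',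
    log_mul (hG n (cn n)).ne' (exp_pos _).ne', log_exp]

theorem concaveOn_log_sinr_exp (hG : ∀ n c, 0 < G n c) (hσ2 : 0 < σ2) (n : Fin N) :
    ConcaveOn ℝ univ fun p : Fin C → ℝ => log (sinr cn G σ2 n fun c => exp (p c)) := by
  simp_rw [log_sinr_exp hG hσ2 n]
  exact ((concaveOn_const _ convex_univ).add ((LinearMap.proj (cn n)).concaveOn convex_univ)).sub
    (convexOn_log_add_sum_mul_exp_s4 _ hσ2 fun c _ => (hG n c).le)

theorem concaveOn_log_rate_exp (hG : ∀ n c, 0 < G n c) (hσ2 : 0 < σ2) (n : Fin N) (W : ℝ) :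
    ConcaveOn ℝ univ fun p : Fin C → ℝ =>
      log W + log (log (1 + sinr cn G σ2 n fun c => exp (p c)) / log 2) := by
  have hrate : ∀ p : Fin C → ℝ,
      log W + log (log (1 + sinr cn G σ2 n fun c => exp (p c)) / log 2) =
        log (log (1 + exp (log (sinr cn G σ2 n fun c => exp (p c))))) + (log W - log (log 2)) := by
    intro p
    have hγ := sinr_exp_pos (cn := cn) hG hσ2 n p
    rw [exp_log hγ, log_div (log_pos (by linarith)).ne' (log_pos one_lt_two).ne']
    ring
  simp_rw [hrate]
  exact (concaveOn_log_log_one_add_exp.comp_of_monotone monotone_log_log_one_add_exp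
    (concaveOn_log_sinr_exp hG hσ2 n)).add_const _

end SINR

theorem transformed_feasible_set_convex_general (N C : ℕ)
    (cn : Fin N → Fin C) (G : Fin N → Fin C → ℝ) (hG : ∀ n c, 0 < G n c)
    (σ2 : ℝ) (hσ2 : 0 < σ2) (W : Fin N → ℝ)
    (Pmax : Fin C → ℝ) :
    Convex ℝ {x : (Fin N → ℝ) × (Fin C → ℝ) |
      (∀ n, x.1 n ≤ Real.log (W n) +
        Real.log (Real.log (1 + sinr cn G σ2 n (fun c => Real.exp (x.2 c))) / Real.log 2)) ∧
      (∀ c, x.2 c ≤ Real.log (Pmax c))} := by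
  refine Convex.inter (convex_setOf_forall_le (fun n => ?_) fun n => ?_)
    (convex_setOf_forall_le (fun c => ?_) fun c => concaveOn_const _ convex_univ)
  · exact (LinearMap.proj n ∘ₗ LinearMap.fst ℝ _ _).convexOn convex_univ
  · exact (concaveOn_log_rate_exp hG hσ2 n (W n)).comp_linearMap (LinearMap.snd ℝ _ _)
  · exact (LinearMap.proj c ∘ₗ LinearMap.snd ℝ _ _).convexOn convex_univ

/-- Proposition 1, first part: the feasible set of the transformed
problem (3) is a convex subset of `(Fin N → ℝ) × (Fin C → ℝ)`. -/
theorem transformed_feasible_set_convex (N C : ℕ) (hN : 0 < N) (hC : 0 < C)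
    (cn : Fin N → Fin C) (G : Fin N → Fin C → ℝ) (hG : ∀ n c, 0 < G n c)
    (σ2 : ℝ) (hσ2 : 0 < σ2) (W : Fin N → ℝ) (hW : ∀ n, 0 < W n)
    (Pmax : Fin C → ℝ) (hPmax : ∀ c, 0 < Pmax c) :
    Convex ℝ {x : (Fin N → ℝ) × (Fin C → ℝ) |
      (∀ n, x.1 n ≤ Real.log (W n) +
        Real.log (Real.log (1 + sinr cn G σ2 n (fun c => Real.exp (x.2 c))) / Real.log 2)) ∧
      (∀ c, x.2 c ≤ Real.log (Pmax c))} :=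
  transformed_feasible_set_convex_general N C cn G hG σ2 hσ2 W Pmax
end
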